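/- Let α, β, γ be non-zero complex numbers and let m, n, m', n' be integers with m ≠ n, m,n ≠ 0, m' ≠ n', m',n' ≠ 0, and (m,n) ≠ (m',n'). Consider the six expressions x₁ = α^m β^n, x₂ = α^n β^m, x₃ = α^m γ^n, x₄ = α^n γ^m, x₅ = β^m γ^n, x₆ = β^n γ^m, and the corresponding primed expressions x₁' = α^{m'} β^{n'}, x₂' = α^{n'} β^{m'}, x₃' = α^{m'} γ^{n'}, x₄' = α^{n'} γ^{m'}, x₅' = β^{m'} γ^{n'}, x₆' = β^{n'} γ^{m'}. Assume the index set {1,…,6} admits a partition into two sets T and U (one possibly empty) such that for any two indices i, j in T one has x_i/x_i' = x_j/x_j', and likewise for any two indices in U. Then one of α/β, α/γ, β/γ is a root of unity. -/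

import Mathlib

open Polynomial
open scoped Classical

/-- A complex number is a root of unity. -/
def IsRootOfUnity (z : ℂ) : Prop := ∃ N : ℕ, 0 < N ∧ z ^ N = 1

/-!
Write `a = m - m'`, `b = n - n'` (not both zero, as `(m, n) ≠ (m', n')`) and read `α, β, γ` as
elements `A, B, C` of the additive group `Additive ℂˣ`. The quotients `xᵢ / xᵢ'` become the six
forms `aA + bB, bA + aB, aA + bC, bA + aC, aB + bC, bB + aC`, and two indices in the same class
give a linear relation between them. Among any three indices two lie in the same class; for well
chosen triples the resulting relations give `k • (A - B) = 0`, `k • (A - C) = 0` or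
`k • (B - C) = 0` for a nonzero `k` among `±a, b, a + b, 2a, 3a`, i.e. a torsion element.
-/

def sixMonomials {M : Type*} [DivInvMonoid M] (A B C : M) (a b : ℤ) : Fin 6 → M :=
  ![A ^ a * B ^ b, A ^ b * B ^ a, A ^ a * C ^ b, A ^ b * C ^ a, B ^ a * C ^ b, B ^ b * C ^ a]

theorem map_sixMonomials {G H F : Type*} [Group G] [DivisionMonoid H] [FunLike F G H]
    [MonoidHomClass F G H] (f : F) (A B C : G) (a b : ℤ) (i : Fin 6) :
    f (sixMonomials A B C a b i) = sixMonomials (f A) (f B) (f C) a b i := by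
  fin_cases i <;> simp [sixMonomials]

theorem sixMonomials_div_sixMonomials {G : Type*} [CommGroup G] (A B C : G) (a b a' b' : ℤ)
    (i : Fin 6) :
    sixMonomials A B C a b i / sixMonomials A B C a' b' i =
      sixMonomials A B C (a - a') (b - b') i := by
  fin_cases i <;>
    simp only [sixMonomials, Fin.reduceFinMk, Matrix.cons_val, zpow_sub, ← div_eq_mul_inv,
      mul_div_mul_comm]

theorem isOfFinAddOrder_of_zsmul_eq_sub {G : Type*} [AddGroup G] {x y z : G} {k : ℤ} (hk : k ≠ 0)
    (hyz : y = z) (h : k • x = y - z) : IsOfFinAddOrder x :=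
  isOfFinAddOrder_iff_zsmul_eq_zero.2 ⟨k, hk, by rw [h, hyz, sub_self]⟩

theorem iff_or_iff_or_iff (p q r : Prop) : (p ↔ q) ∨ (p ↔ r) ∨ (q ↔ r) := by
  tauto

theorem eq_of_mem_iff_mem_of_union_eq_univ {ι α : Type*} [Fintype ι] [DecidableEq ι]
    {T U : Finset ι} {f : ι → α} (hcover : T ∪ U = Finset.univ)
    (hT : ∀ i ∈ T, ∀ j ∈ T, f i = f j) (hU : ∀ i ∈ U, ∀ j ∈ U, f i = f j) {i j : ι}
    (hij : i ∈ T ↔ j ∈ T) : f i = f j := by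
  have hmemU : ∀ k, k ∉ T → k ∈ U := fun k hk =>
    (Finset.mem_union.1 (hcover ▸ Finset.mem_univ k)).resolve_left hk
  by_cases hi : i ∈ T
  · exact hT i hi j (hij.1 hi)
  · exact hU i (hmemU i hi) j (hmemU j (mt hij.2 hi))

section AddCommGroup

variable {G : Type*} [AddCommGroup G]

def sixForms (A B C : G) (a b : ℤ) : Fin 6 → G :=
  ![a • A + b • B, b • A + a • B, a • A + b • C, b • A + a • C, a • B + b • C, b • B + a • C]

variable (A B C : G) {a b : ℤ} (p : Fin 6 → Prop)

theorem isOfFinAddOrder_sub_of_sixForms_zero_left (hb : b ≠ 0)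
    (h : ∀ i j, (p i ↔ p j) → sixForms A B C 0 b i = sixForms A B C 0 b j) :
    IsOfFinAddOrder (A - B) ∨ IsOfFinAddOrder (A - C) ∨ IsOfFinAddOrder (B - C) := by
  rcases iff_or_iff_or_iff (p 0) (p 1) (p 2) with h01 | h02 | h12
  · exact .inl <| isOfFinAddOrder_of_zsmul_eq_sub hb (h 1 0 h01.symm)
      (by simp only [sixForms, Matrix.cons_val]; module)
  · exact .inr <| .inr <| isOfFinAddOrder_of_zsmul_eq_sub hb (h 0 2 h02)
      (by simp only [sixForms, Matrix.cons_val]; module)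
  · exact .inr <| .inl <| isOfFinAddOrder_of_zsmul_eq_sub hb (h 1 2 h12)
      (by simp only [sixForms, Matrix.cons_val]; module)

theorem isOfFinAddOrder_sub_of_sixForms_zero_right (ha : a ≠ 0)
    (h : ∀ i j, (p i ↔ p j) → sixForms A B C a 0 i = sixForms A B C a 0 j) :
    IsOfFinAddOrder (A - B) ∨ IsOfFinAddOrder (A - C) ∨ IsOfFinAddOrder (B - C) := by
  rcases iff_or_iff_or_iff (p 0) (p 1) (p 3) with h01 | h03 | h13
  · exact .inl <| isOfFinAddOrder_of_zsmul_eq_sub ha (h 0 1 h01)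
      (by simp only [sixForms, Matrix.cons_val]; module)
  · exact .inr <| .inl <| isOfFinAddOrder_of_zsmul_eq_sub ha (h 0 3 h03)
      (by simp only [sixForms, Matrix.cons_val]; module)
  · exact .inr <| .inr <| isOfFinAddOrder_of_zsmul_eq_sub ha (h 1 3 h13)
      (by simp only [sixForms, Matrix.cons_val]; module)

theorem isOfFinAddOrder_sub_of_sixForms_neg (ha : a ≠ 0)
    (h : ∀ i j, (p i ↔ p j) → sixForms A B C a (-a) i = sixForms A B C a (-a) j)
    (h04 : p 0 ↔ p 4) :
    IsOfFinAddOrder (A - B) ∨ IsOfFinAddOrder (A - C) ∨ IsOfFinAddOrder (B - C) := by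
  rcases iff_or_iff_or_iff (p 0) (p 2) (p 3) with h02 | h03 | h23
  · exact .inr <| .inr <| isOfFinAddOrder_of_zsmul_eq_sub (neg_ne_zero.2 ha) (h 0 2 h02)
      (by simp only [sixForms, Matrix.cons_val]; module)
  · have h_sum : sixForms A B C a (-a) 0 + sixForms A B C a (-a) 0 =
        sixForms A B C a (-a) 3 + sixForms A B C a (-a) 4 := by
      rw [← h 0 3 h03, ← h 0 4 h04]
    exact .inl <| isOfFinAddOrder_of_zsmul_eq_sub (by omega : 3 * a ≠ 0) h_sum
      (by simp only [sixForms, Matrix.cons_val]; module)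
  · exact .inr <| .inl <| isOfFinAddOrder_of_zsmul_eq_sub (by omega : 2 * a ≠ 0) (h 2 3 h23)
      (by simp only [sixForms, Matrix.cons_val]; module)

theorem isOfFinAddOrder_sub_of_sixForms (ha : a ≠ 0) (hb : b ≠ 0)
    (h : ∀ i j, (p i ↔ p j) → sixForms A B C a b i = sixForms A B C a b j) :
    IsOfFinAddOrder (A - B) ∨ IsOfFinAddOrder (A - C) ∨ IsOfFinAddOrder (B - C) := by
  rcases iff_or_iff_or_iff (p 0) (p 2) (p 4) with h02 | h04 | h24
  · exact .inr <| .inr <| isOfFinAddOrder_of_zsmul_eq_sub hb (h 0 2 h02)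
      (by simp only [sixForms, Matrix.cons_val]; module)
  · rcases iff_or_iff_or_iff (p 1) (p 3) (p 5) with h13 | h15 | h35
    · exact .inr <| .inr <| isOfFinAddOrder_of_zsmul_eq_sub ha (h 1 3 h13)
        (by simp only [sixForms, Matrix.cons_val]; module)
    · by_cases hab : a + b = 0
      · obtain rfl : b = -a := by omega
        exact isOfFinAddOrder_sub_of_sixForms_neg A B C p ha h h04
      have h_sum : sixForms A B C a b 0 + sixForms A B C a b 1 =
          sixForms A B C a b 4 + sixForms A B C a b 5 := by
        rw [h 0 4 h04, h 1 5 h15]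
      exact .inr <| .inl <| isOfFinAddOrder_of_zsmul_eq_sub hab h_sum
        (by simp only [sixForms, Matrix.cons_val]; module)
    · exact .inl <| isOfFinAddOrder_of_zsmul_eq_sub hb (h 3 5 h35)
        (by simp only [sixForms, Matrix.cons_val]; module)
  · exact .inl <| isOfFinAddOrder_of_zsmul_eq_sub ha (h 2 4 h24)
      (by simp only [sixForms, Matrix.cons_val]; module)

theorem isOfFinAddOrder_sub_of_sixForms_eq_on_classes (hab : a ≠ 0 ∨ b ≠ 0)
    (h : ∀ i j, (p i ↔ p j) → sixForms A B C a b i = sixForms A B C a b j) :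
    IsOfFinAddOrder (A - B) ∨ IsOfFinAddOrder (A - C) ∨ IsOfFinAddOrder (B - C) := by
  rcases eq_or_ne a 0 with rfl | ha
  · exact isOfFinAddOrder_sub_of_sixForms_zero_left A B C p (hab.resolve_left fun h => h rfl) h
  rcases eq_or_ne b 0 with rfl | hb
  · exact isOfFinAddOrder_sub_of_sixForms_zero_right A B C p ha h
  · exact isOfFinAddOrder_sub_of_sixForms A B C p ha hb h

end AddCommGroup

theorem isOfFinOrder_div_of_sixMonomials_eq_on_classes {G : Type*} [CommGroup G] (A B C : G)
    {a b : ℤ} (hab : a ≠ 0 ∨ b ≠ 0) (p : Fin 6 → Prop)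
    (h : ∀ i j, (p i ↔ p j) → sixMonomials A B C a b i = sixMonomials A B C a b j) :
    IsOfFinOrder (A / B) ∨ IsOfFinOrder (A / C) ∨ IsOfFinOrder (B / C) := by
  have h_ofMul : ∀ i, Additive.ofMul (sixMonomials A B C a b i) =
      sixForms (.ofMul A) (.ofMul B) (.ofMul C) a b i := by
    intro i; fin_cases i <;> rfl
  have := isOfFinAddOrder_sub_of_sixForms_eq_on_classes _ _ _ p hab fun i j hij => by
    rw [← h_ofMul, ← h_ofMul, h i j hij]
  rwa [← ofMul_div, ← ofMul_div, ← ofMul_div, isOfFinAddOrder_ofMul_iff, isOfFinAddOrder_ofMul_iff,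
    isOfFinAddOrder_ofMul_iff] at this

theorem isRootOfUnity_iff_isOfFinOrder (z : ℂ) : IsRootOfUnity z ↔ IsOfFinOrder z :=
  isOfFinOrder_iff_pow_eq_one.symm

theorem isRootOfUnity_div_of_isOfFinOrder_mk0 {x y : ℂ} (hx : x ≠ 0) (hy : y ≠ 0)
    (h : IsOfFinOrder (Units.mk0 x hx / Units.mk0 y hy)) : IsRootOfUnity (x / y) := by
  rw [isRootOfUnity_iff_isOfFinOrder, ← Units.val_mk0 hx, ← Units.val_mk0 hy,
    ← Units.val_div_eq_div_val]
  exact Units.isOfFinOrder_val.2 h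

theorem rootOfUnity_of_partition_two_sets_general (α β γ : ℂ) (m n m' n' : ℤ)
    (hα : α ≠ 0) (hβ : β ≠ 0) (hγ : γ ≠ 0)
    (hpair : (m, n) ≠ (m', n'))
    (x x' : Fin 6 → ℂ)
    (hx : x = ![α ^ m * β ^ n, α ^ n * β ^ m, α ^ m * γ ^ n, α ^ n * γ ^ m,
      β ^ m * γ ^ n, β ^ n * γ ^ m])
    (hx' : x' = ![α ^ m' * β ^ n', α ^ n' * β ^ m', α ^ m' * γ ^ n', α ^ n' * γ ^ m',
      β ^ m' * γ ^ n', β ^ n' * γ ^ m'])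
    (hpart : ∃ T U : Finset (Fin 6), Disjoint T U ∧ T ∪ U = Finset.univ ∧
      (∀ i ∈ T, ∀ j ∈ T, x i / x' i = x j / x' j) ∧
      (∀ i ∈ U, ∀ j ∈ U, x i / x' i = x j / x' j)) :
    IsRootOfUnity (α / β) ∨ IsRootOfUnity (α / γ) ∨ IsRootOfUnity (β / γ) := by
  obtain ⟨T, U, -, hcover, hT, hU⟩ := hpart
  have hab : m - m' ≠ 0 ∨ n - n' ≠ 0 := by
    by_contra! h
    exact hpair (Prod.ext (by omega) (by omega))
  set A := Units.mk0 α hα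
  set B := Units.mk0 β hβ
  set C := Units.mk0 γ hγ
  have hquot : ∀ i, x i / x' i = ((sixMonomials A B C (m - m') (n - n') i : ℂˣ) : ℂ) := by
    intro i
    have hval := fun a b => map_sixMonomials (Units.coeHom ℂ) A B C a b i
    simp only [Units.coeHom_apply, Units.val_mk0, A, B, C] at hval
    rw [← sixMonomials_div_sixMonomials, Units.val_div_eq_div_val, hval, hval, hx, hx']
    rfl
  have hclasses : ∀ i j, (i ∈ T ↔ j ∈ T) →
      sixMonomials A B C (m - m') (n - n') i = sixMonomials A B C (m - m') (n - n') j :=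
    fun i j hij => Units.ext <| by
      rw [← hquot, ← hquot]
      exact eq_of_mem_iff_mem_of_union_eq_univ hcover hT hU hij
  exact (isOfFinOrder_div_of_sixMonomials_eq_on_classes A B C hab (· ∈ T) hclasses).imp
    (isRootOfUnity_div_of_isOfFinOrder_mk0 hα hβ) (Or.imp
      (isRootOfUnity_div_of_isOfFinOrder_mk0 hα hγ) (isRootOfUnity_div_of_isOfFinOrder_mk0 hβ hγ))

/-- If the index set of the six monomial expressions admits a partition into two sets on
each of which the quotient `xᵢ / xᵢ'` is constant, then one of `α/β`, `α/γ`, `β/γ` is a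
root of unity. -/
theorem rootOfUnity_of_partition_two_sets (α β γ : ℂ) (m n m' n' : ℤ)
    (hα : α ≠ 0) (hβ : β ≠ 0) (hγ : γ ≠ 0)
    (hmn : m ≠ n) (hm : m ≠ 0) (hn : n ≠ 0)
    (hmn' : m' ≠ n') (hm' : m' ≠ 0) (hn' : n' ≠ 0)
    (hpair : (m, n) ≠ (m', n'))
    (x x' : Fin 6 → ℂ)
    (hx : x = ![α ^ m * β ^ n, α ^ n * β ^ m, α ^ m * γ ^ n, α ^ n * γ ^ m,
      β ^ m * γ ^ n, β ^ n * γ ^ m])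
    (hx' : x' = ![α ^ m' * β ^ n', α ^ n' * β ^ m', α ^ m' * γ ^ n', α ^ n' * γ ^ m',
      β ^ m' * γ ^ n', β ^ n' * γ ^ m'])
    (hpart : ∃ T U : Finset (Fin 6), Disjoint T U ∧ T ∪ U = Finset.univ ∧
      (∀ i ∈ T, ∀ j ∈ T, x i / x' i = x j / x' j) ∧
      (∀ i ∈ U, ∀ j ∈ U, x i / x' i = x j / x' j)) :
    IsRootOfUnity (α / β) ∨ IsRootOfUnity (α / γ) ∨ IsRootOfUnity (β / γ) :=
  rootOfUnity_of_partition_two_sets_general α β γ m n m' n' hα hβ hγ hpair x x' hx hx' hpart
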